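/- Conditional unbiasedness of the augmented inverse probability weighting (AIPW) score, doubly robust in the outcome plug-in: fix t ∈ {0,…,J}, suppose unconfoundedness holds at t, and let c be any real number. Then E[ c + 1{T = t}·(Y − c)/e_t | A ] = E[Y_t | A] (note e_t > 0 by assumption). -/

import Mathlib

/-!
Write `ν = P[|A]` and `S = {T = t}`, so that `e_t = ν(S)`. On `S` the observed outcome is `Y_t`,
and off `S` the score is the constant `c`; hence
`E_ν[score] = c + (E_ν[1_S Y_t] - c ν(S)) / ν(S) = E_ν[Y_t | S]`, whatever `c` is.
Conditioning on `A` and then on `S` is conditioning on `A ∩ S`, so this is `μ̄_t`,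
which unconfoundedness identifies with `m_t`.
-/

open MeasureTheory ProbabilityTheory

namespace ProbabilityTheory

variable {Ω E : Type*} [MeasurableSpace Ω] [NormedAddCommGroup E] {μ : Measure Ω} {s : Set Ω}

lemma _root_.MeasureTheory.Integrable.cond {f : Ω → E} (hf : Integrable f μ) (hs : μ s ≠ 0) :
    Integrable f μ[|s] :=
  hf.restrict.smul_measure (ENNReal.inv_ne_top.2 hs)

lemma setIntegral_eq_measureReal_smul_integral_cond [NormedSpace ℝ E] [IsFiniteMeasure μ]
    (f : Ω → E) : ∫ ω in s, f ω ∂μ = μ.real s • ∫ ω, f ω ∂μ[|s] := by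
  rcases eq_or_ne (μ s) 0 with hs | hs
  · simp [Measure.restrict_eq_zero.2 hs, measureReal_def, hs]
  · rw [cond, integral_smul_measure, ENNReal.toReal_inv, smul_smul,
      ← measureReal_def, mul_inv_cancel₀ ((measureReal_ne_zero_iff).2 hs), one_smul]

lemma integral_const_add_indicator_sub_div_eq_integral_cond [IsProbabilityMeasure μ]
    (hs : MeasurableSet s) (hμs : μ s ≠ 0) {g : Ω → ℝ} (hg : Integrable g μ) (c : ℝ) :
    ∫ ω, (c + s.indicator (fun ω ↦ g ω - c) ω / μ.real s) ∂μ = ∫ ω, g ω ∂μ[|s] := by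
  have : IsProbabilityMeasure μ[|s] := cond_isProbabilityMeasure hμs
  have hμs' : μ.real s ≠ 0 := (measureReal_ne_zero_iff).2 hμs
  have hind : Integrable (fun ω ↦ s.indicator (fun ω ↦ g ω - c) ω / μ.real s) μ :=
    ((hg.sub (integrable_const c)).indicator hs).div_const _
  rw [integral_add (integrable_const c) hind, integral_const, probReal_univ, one_smul,
    integral_div, integral_indicator hs, setIntegral_eq_measureReal_smul_integral_cond,
    integral_sub (hg.cond hμs) (integrable_const c), integral_const, probReal_univ, one_smul, smul_eq_mul]
  field_simp
  ring

end ProbabilityTheory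

theorem aipw_score_conditionally_unbiased_general
    {Ω : Type*} [MeasurableSpace Ω] (P : Measure Ω) [IsProbabilityMeasure P]
    (J : ℕ)
    (T : Ω → ℕ) (hT : Measurable T)
    (Y : ℕ → Ω → ℝ) (hYint : ∀ t, Integrable (Y t) P)
    (A : Set Ω) (hA : MeasurableSet A)
    (hpos : ∀ t ≤ J, 0 < P (A ∩ {ω | T ω = t}))
    (Yobs : Ω → ℝ)
    (hYobs : ∀ ω, Yobs ω = ∑ t ∈ Finset.range (J + 1), if T ω = t then Y t ω else 0)
    (e : ℕ → ℝ) (he : ∀ t, e t = ((P[|A]) {ω | T ω = t}).toReal)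
    (m : ℕ → ℝ) (hm : ∀ t, m t = ∫ ω, Y t ω ∂(P[|A]))
    (μbar : ℕ → ℝ)
    (hμbar : ∀ t, μbar t = ∫ ω, Y t ω ∂(P[|(A ∩ {ω | T ω = t})]))
    (t : ℕ) (ht : t ≤ J)
    (hunconf : μbar t = m t)
    (c : ℝ) :
    ∫ ω, (c + (if T ω = t then (1 : ℝ) else 0) * (Yobs ω - c) / e t) ∂(P[|A])
      = ∫ ω, Y t ω ∂(P[|A]) := by
  set S : Set Ω := {ω | T ω = t}
  have hS : MeasurableSet S := hT (measurableSet_singleton t)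
  have hAS : P (A ∩ S) ≠ 0 := (hpos t ht).ne'
  have hA0 : P A ≠ 0 := (measure_pos_of_superset Set.inter_subset_left hAS).ne'
  have : IsProbabilityMeasure P[|A] := cond_isProbabilityMeasure hA0
  have hS0 : P[|A] S ≠ 0 := (cond_pos_of_inter_ne_zero hA hAS).ne'
  have hYobs_on : ∀ ω ∈ S, Yobs ω = Y t ω := fun ω (hω : T ω = t) ↦ by
    simp [hYobs, Finset.sum_ite_eq, hω, Nat.lt_succ_of_le ht]
  have hscore : (fun ω ↦ c + (if T ω = t then (1 : ℝ) else 0) * (Yobs ω - c) / e t)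
      = fun ω ↦ c + S.indicator (fun ω ↦ Y t ω - c) ω / (P[|A]).real S := by
    funext ω
    by_cases hω : ω ∈ S
    · rw [if_pos (show T ω = t from hω), one_mul, hYobs_on ω hω, Set.indicator_of_mem hω, he,
        measureReal_def]
    · rw [if_neg (show T ω ≠ t from hω), zero_mul, zero_div, Set.indicator_of_notMem hω, zero_div]
  calc _ = ∫ ω, Y t ω ∂P[|A][|S] := by
        rw [hscore]
        exact integral_const_add_indicator_sub_div_eq_integral_cond hS hS0 ((hYint t).cond hA0) c
    _ = μbar t := by rw [cond_cond_eq_cond_inter hA hS, hμbar]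
    _ = _ := hunconf.trans (hm t)

/-- Conditional unbiasedness of the AIPW score, doubly robust in the
outcome plug-in: for any real `c`, `E[c + 1{T=t}·(Y − c)/e_t | A] = E[Y_t | A]`,
under unconfoundedness at `t`. -/
theorem aipw_score_conditionally_unbiased
    {Ω : Type*} [MeasurableSpace Ω] (P : Measure Ω) [IsProbabilityMeasure P]
    (J : ℕ) (hJ : 1 ≤ J)
    (T : Ω → ℕ) (hT : Measurable T) (hTle : ∀ ω, T ω ≤ J)
    (Y : ℕ → Ω → ℝ) (hYmeas : ∀ t, Measurable (Y t)) (hYint : ∀ t, Integrable (Y t) P)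
    (A : Set Ω) (hA : MeasurableSet A)
    (hpos : ∀ t ≤ J, 0 < P (A ∩ {ω | T ω = t}))
    (Yobs : Ω → ℝ)
    (hYobs : ∀ ω, Yobs ω = ∑ t ∈ Finset.range (J + 1), if T ω = t then Y t ω else 0)
    (e : ℕ → ℝ) (he : ∀ t, e t = ((P[|A]) {ω | T ω = t}).toReal)
    (m : ℕ → ℝ) (hm : ∀ t, m t = ∫ ω, Y t ω ∂(P[|A]))
    (μbar : ℕ → ℝ)
    (hμbar : ∀ t, μbar t = ∫ ω, Y t ω ∂(P[|(A ∩ {ω | T ω = t})]))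
    (t : ℕ) (ht : t ≤ J)
    (hunconf : μbar t = m t)
    (c : ℝ) :
    ∫ ω, (c + (if T ω = t then (1 : ℝ) else 0) * (Yobs ω - c) / e t) ∂(P[|A])
      = ∫ ω, Y t ω ∂(P[|A]) :=
  aipw_score_conditionally_unbiased_general P J T hT Y hYint A hA hpos Yobs hYobs e he m hm μbar
    hμbar t ht hunconf c
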